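/- Let θ : ℝ² × [0,T) → ℝ be C² satisfying ∂θ/∂t = Hess_x θ(V₁,V₁) with V₁ = (cos θ, sin θ), and let X : (−ε,ε) × [0,T) → ℝ² be C² with X_s = V₁(X,t). If at s = 0 one has ⟨X_t(0,t), V₂(X(0,t),t)⟩ = θ_s(0,t) for all t, then ⟨X_t(s,t), V₂(X(s,t),t)⟩ = θ_s(s,t) for all (s,t), where V₂ = (−sin θ, cos θ) and θ_s = ∂_s[θ(X(s,t),t)]. -/

import Mathlib

/-!
Fix `t` and regard `h = ⟨X_t, V₂⟩ - θ_s` as a function of `s`. Differentiating in `s`, the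
mixed partial `∂_s X_t = ∂_t X_s = ∂_t V₁` equals `(d/dt θ(X, t)) V₂`, the frame rotates by
`∂_s V₂ = -θ_s V₁`, and the PDE turns the Hessian term `Hess θ(V₁, V₁)` of `∂_s θ_s` into `∂_t θ`.
Expanding `∇θ · X_t` in the frame `V₁, V₂`, everything cancels except `∂_s h = (∇_{V₂} θ) h`, and a
solution of this linear ODE vanishing at `s = 0` vanishes identically.
-/

theorem eq_zero_of_hasDerivAt_mul_self {h c : ℝ → ℝ} (hc : Continuous c)
    (hd : ∀ s, HasDerivAt h (c s * h s) s) (h0 : h 0 = 0) (s : ℝ) : h s = 0 := by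
  set C : ℝ → ℝ := fun s => ∫ τ in (0 : ℝ)..s, c τ
  have hC : ∀ s, HasDerivAt C (c s) s := fun s =>
    intervalIntegral.integral_hasDerivAt_right (hc.intervalIntegrable 0 s)
      (hc.stronglyMeasurableAtFilter _ _) hc.continuousAt
  have hg : ∀ s, HasDerivAt (fun s => h s * Real.exp (-C s)) 0 s := fun s =>
    ((hd s).mul (hC s).neg.exp).congr_deriv (by ring)
  have hconst := is_const_of_deriv_eq_zero (fun s => (hg s).differentiableAt)
    (fun s => (hg s).deriv) s 0
  simpa [h0, Real.exp_ne_zero] using hconst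

theorem map_eq_smul_cos_sin_add_smul_neg_sin_cos {F M : Type*} [AddCommGroup M] [Module ℝ M]
    [FunLike F (ℝ × ℝ) M] [LinearMapClass F ℝ (ℝ × ℝ) M] (L : F) (a : ℝ × ℝ) (φ : ℝ) :
    L a = (a.1 * Real.cos φ + a.2 * Real.sin φ) • L (Real.cos φ, Real.sin φ)
      + (a.1 * -Real.sin φ + a.2 * Real.cos φ) • L (-Real.sin φ, Real.cos φ) := by
  rw [← map_smul, ← map_smul, ← map_add]
  congr 1
  ext <;> simp only [Prod.fst_add, Prod.snd_add, Prod.smul_fst, Prod.smul_snd, smul_eq_mul]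
  · linear_combination (-a.1) * Real.sin_sq_add_cos_sq φ
  · linear_combination (-a.2) * Real.sin_sq_add_cos_sq φ

theorem HasDerivAt.cos_sin {f : ℝ → ℝ} {f' x : ℝ} (hf : HasDerivAt f f' x) :
    HasDerivAt (fun y => (Real.cos (f y), Real.sin (f y)))
      (f' • (-Real.sin (f x), Real.cos (f x))) x := by
  convert hf.cos.prodMk hf.sin using 1
  ext <;> simp only [Prod.smul_fst, Prod.smul_snd, smul_eq_mul] <;> ring

theorem HasDerivAt.fst_mul_neg_sin_add_snd_mul_cos {a : ℝ → ℝ × ℝ} {a' : ℝ × ℝ} {φ : ℝ → ℝ}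
    {φ' x : ℝ} (ha : HasDerivAt a a' x) (hφ : HasDerivAt φ φ' x) :
    HasDerivAt (fun y => (a y).1 * -Real.sin (φ y) + (a y).2 * Real.cos (φ y))
      (a'.1 * -Real.sin (φ x) + a'.2 * Real.cos (φ x)
        - φ' * ((a x).1 * Real.cos (φ x) + (a x).2 * Real.sin (φ x))) x := by
  have ha₁ : HasDerivAt (fun y => (a y).1) a'.1 x :=
    (hasFDerivAt_fst (p := a x)).comp_hasDerivAt x ha
  have ha₂ : HasDerivAt (fun y => (a y).2) a'.2 x :=
    (hasFDerivAt_snd (p := a x)).comp_hasDerivAt x ha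
  exact ((ha₁.fun_mul hφ.sin.fun_neg).fun_add (ha₂.fun_mul hφ.cos)).congr_deriv (by ring)

section Partial

variable {E₁ E₂ F : Type*} [NormedAddCommGroup E₁] [NormedSpace ℝ E₁] [NormedAddCommGroup E₂]
  [NormedSpace ℝ E₂] [NormedAddCommGroup F] [NormedSpace ℝ F] {f : E₁ → E₂ → F} {x : E₁} {y : E₂}

theorem DifferentiableAt.fderiv_uncurry_apply
    (hf : DifferentiableAt ℝ (fun q : E₁ × E₂ => f q.1 q.2) (x, y)) (v : E₁) (w : E₂) :
    fderiv ℝ (fun q : E₁ × E₂ => f q.1 q.2) (x, y) (v, w)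
      = fderiv ℝ (fun x' => f x' y) x v + fderiv ℝ (fun y' => f x y') y w := by
  have hx : HasFDerivAt (fun x' => f x' y)
      ((fderiv ℝ (fun q : E₁ × E₂ => f q.1 q.2) (x, y)).comp (.inl ℝ E₁ E₂)) x :=
    hf.hasFDerivAt.comp (f := fun x' => (x', y)) x (hasFDerivAt_prodMk_left x y)
  have hy : HasFDerivAt (fun y' => f x y')
      ((fderiv ℝ (fun q : E₁ × E₂ => f q.1 q.2) (x, y)).comp (.inr ℝ E₁ E₂)) y :=
    hf.hasFDerivAt.comp (f := fun y' => (x, y')) y (hasFDerivAt_prodMk_right x y)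
  simp [hx.fderiv, hy.fderiv, ← map_add]

theorem DifferentiableAt.hasDerivAt_comp_prodMk {f : E₁ → ℝ → F} {γ : ℝ → E₁} {γ' : E₁} {t : ℝ}
    (hf : DifferentiableAt ℝ (fun q : E₁ × ℝ => f q.1 q.2) (γ t, t)) (hγ : HasDerivAt γ γ' t) :
    HasDerivAt (fun τ => f (γ τ) τ)
      (fderiv ℝ (fun r => f r t) (γ t) γ' + deriv (f (γ t)) t) t := by
  have := hf.hasFDerivAt.comp_hasDerivAt (f := fun τ => (γ τ, τ)) t
    (hγ.prodMk (hasDerivAt_id t))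
  rw [hf.fderiv_uncurry_apply, fderiv_apply_one_eq_deriv] at this
  exact this

end Partial

section Schwarz

variable {E : Type*} [NormedAddCommGroup E] [NormedSpace ℝ E] {X : ℝ → ℝ → E} {s t : ℝ}

theorem DifferentiableAt.deriv_left_eq_fderiv_apply
    (hX : DifferentiableAt ℝ (fun q : ℝ × ℝ => X q.1 q.2) (s, t)) :
    deriv (fun σ => X σ t) s = fderiv ℝ (fun q : ℝ × ℝ => X q.1 q.2) (s, t) (1, 0) := by
  simp [hX.fderiv_uncurry_apply]

theorem DifferentiableAt.deriv_right_eq_fderiv_apply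
    (hX : DifferentiableAt ℝ (fun q : ℝ × ℝ => X q.1 q.2) (s, t)) :
    deriv (fun τ => X s τ) t = fderiv ℝ (fun q : ℝ × ℝ => X q.1 q.2) (s, t) (0, 1) := by
  simp [hX.fderiv_uncurry_apply]

theorem ContDiff.hasDerivAt_deriv_deriv_comm (hX : ContDiff ℝ 2 (fun q : ℝ × ℝ => X q.1 q.2))
    (s t : ℝ) :
    HasDerivAt (fun σ => deriv (fun τ => X σ τ) t)
      (deriv (fun τ => deriv (fun σ => X σ τ) s) t) s := by
  set D := fderiv ℝ (fun q : ℝ × ℝ => X q.1 q.2)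
  have hD : Differentiable ℝ D := (hX.fderiv_right (m := 1) le_rfl).differentiable one_ne_zero
  have hXd : Differentiable ℝ (fun q : ℝ × ℝ => X q.1 q.2) := hX.differentiable two_ne_zero
  have hright : (fun σ => deriv (fun τ => X σ τ) t) = fun σ => D (σ, t) (0, 1) :=
    funext fun σ => (hXd (σ, t)).deriv_right_eq_fderiv_apply
  have hleft : (fun τ => deriv (fun σ => X σ τ) s) = fun τ => D (s, τ) (1, 0) :=
    funext fun τ => (hXd (s, τ)).deriv_left_eq_fderiv_apply
  have hsymm : fderiv ℝ D (s, t) (1, 0) (0, 1) = fderiv ℝ D (s, t) (0, 1) (1, 0) :=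
    hX.contDiffAt.isSymmSndFDerivAt (by simp) _ _
  have hs : HasDerivAt (fun σ => D (σ, t)) (fderiv ℝ D (s, t) (1, 0)) s :=
    (hD _).hasFDerivAt.comp_hasDerivAt s ((hasDerivAt_id s).prodMk (hasDerivAt_const s t))
  have ht : HasDerivAt (fun τ => D (s, τ)) (fderiv ℝ D (s, t) (0, 1)) t :=
    (hD _).hasFDerivAt.comp_hasDerivAt t ((hasDerivAt_const t s).prodMk (hasDerivAt_id t))
  rw [hright, hleft, (ht.clm_apply (hasDerivAt_const t (1, 0))).deriv]
  simpa [hsymm] using hs.clm_apply (hasDerivAt_const s (0, 1))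

end Schwarz

theorem hasDerivAt_deriv_right_of_deriv_left_eq_cos_sin {X : ℝ → ℝ → ℝ × ℝ}
    (hX : ContDiff ℝ 2 (fun q : ℝ × ℝ => X q.1 q.2)) {α : ℝ → ℝ → ℝ}
    (hXs : ∀ s t, deriv (fun σ => X σ t) s = (Real.cos (α s t), Real.sin (α s t)))
    {s t m : ℝ} (hα : HasDerivAt (α s) m t) :
    HasDerivAt (fun σ => deriv (fun τ => X σ τ) t)
      (m • (-Real.sin (α s t), Real.cos (α s t))) s := by
  have := hX.hasDerivAt_deriv_deriv_comm s t
  rwa [funext fun τ => hXs s τ, hα.cos_sin.deriv] at this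

section IntegralCurve

variable {u : ℝ × ℝ → ℝ} {γ : ℝ → ℝ × ℝ}

theorem hasDerivAt_comp_of_integralCurve (hu : Differentiable ℝ u)
    (hγ : ∀ σ, HasDerivAt γ (Real.cos (u (γ σ)), Real.sin (u (γ σ))) σ) (s : ℝ) :
    HasDerivAt (fun σ => u (γ σ))
      (fderiv ℝ u (γ s) (Real.cos (u (γ s)), Real.sin (u (γ s)))) s :=
  (hu _).hasFDerivAt.comp_hasDerivAt s (hγ s)

theorem hasDerivAt_fderiv_apply_of_integralCurve (hu : ContDiff ℝ 2 u)
    (hγ : ∀ σ, HasDerivAt γ (Real.cos (u (γ σ)), Real.sin (u (γ σ))) σ) (s : ℝ) :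
    HasDerivAt (fun σ => fderiv ℝ u (γ σ) (Real.cos (u (γ σ)), Real.sin (u (γ σ))))
      (fderiv ℝ (fderiv ℝ u) (γ s) (Real.cos (u (γ s)), Real.sin (u (γ s)))
          (Real.cos (u (γ s)), Real.sin (u (γ s)))
        + fderiv ℝ u (γ s) (Real.cos (u (γ s)), Real.sin (u (γ s)))
          * fderiv ℝ u (γ s) (-Real.sin (u (γ s)), Real.cos (u (γ s)))) s := by
  have hDu : HasDerivAt (fun σ => fderiv ℝ u (γ σ))
      (fderiv ℝ (fderiv ℝ u) (γ s) (Real.cos (u (γ s)), Real.sin (u (γ s)))) s :=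
    ((hu.fderiv_right (m := 1) le_rfl).differentiable one_ne_zero _).hasFDerivAt.comp_hasDerivAt
      s (hγ s)
  have := hDu.clm_apply
    (hasDerivAt_comp_of_integralCurve (hu.differentiable two_ne_zero) hγ s).cos_sin
  rwa [map_smul, smul_eq_mul] at this

end IntegralCurve

noncomputable def normalDefect (θ : ℝ × ℝ → ℝ → ℝ) (X : ℝ → ℝ → ℝ × ℝ) (t s : ℝ) : ℝ :=
  (deriv (fun τ => X s τ) t).1 * (-Real.sin (θ (X s t) t))
    + (deriv (fun τ => X s τ) t).2 * Real.cos (θ (X s t) t)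
    - deriv (fun σ => θ (X σ t) t) s

theorem hasDerivAt_normalDefect {θ : ℝ × ℝ → ℝ → ℝ} {X : ℝ → ℝ → ℝ × ℝ} {t : ℝ}
    (hθ : ContDiff ℝ 2 (fun q : (ℝ × ℝ) × ℝ => θ q.1 q.2))
    (hX : ContDiff ℝ 2 (fun q : ℝ × ℝ => X q.1 q.2))
    (hXs : ∀ s t, deriv (fun σ => X σ t) s
      = (Real.cos (θ (X s t) t), Real.sin (θ (X s t) t)))
    (hpde : ∀ p : ℝ × ℝ, deriv (θ p) t
        = fderiv ℝ (fderiv ℝ (fun r => θ r t)) p (Real.cos (θ p t), Real.sin (θ p t))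
            (Real.cos (θ p t), Real.sin (θ p t))) (s : ℝ) :
    HasDerivAt (normalDefect θ X t)
      (fderiv ℝ (fun r => θ r t) (X s t) (-Real.sin (θ (X s t) t), Real.cos (θ (X s t) t))
        * normalDefect θ X t s) s := by
  have hθd := hθ.differentiable two_ne_zero
  have hXd := hX.differentiable two_ne_zero
  have hu : ContDiff ℝ 2 (fun r => θ r t) := hθ.comp (contDiff_id.prodMk contDiff_const)
  have hγ : ∀ σ, HasDerivAt (fun σ => X σ t)
      (Real.cos (θ (X σ t) t), Real.sin (θ (X σ t) t)) σ := fun σ => by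
    rw [← hXs]
    exact (hXd.comp (differentiable_id.prodMk (differentiable_const t)) σ).hasDerivAt
  have hXt : HasDerivAt (fun τ => X s τ) (deriv (fun τ => X s τ) t) t :=
    (hXd.comp ((differentiable_const s).prodMk differentiable_id) t).hasDerivAt
  have hψ := (hθd _).hasDerivAt_comp_prodMk hXt
  have hA := hasDerivAt_deriv_right_of_deriv_left_eq_cos_sin hX hXs hψ
  have hφ := hasDerivAt_comp_of_integralCurve (hu.differentiable two_ne_zero) hγ
  have hκ := hasDerivAt_fderiv_apply_of_integralCurve hu hγ s
  rw [← hpde, ← funext fun σ => (hφ σ).deriv] at hκ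
  refine ((hA.fst_mul_neg_sin_add_snd_mul_cos (hφ s)).sub hκ).congr_deriv ?_
  set L := fderiv ℝ (fun r => θ r t) (X s t)
  set A := deriv (fun τ => X s τ) t
  have hLA := map_eq_smul_cos_sin_add_smul_neg_sin_cos L A (θ (X s t) t)
  rw [normalDefect, (hφ s).deriv]
  simp only [Prod.smul_fst, Prod.smul_snd, smul_eq_mul] at hLA ⊢
  linear_combination (L A + deriv (θ (X s t)) t) * Real.sin_sq_add_cos_sq (θ (X s t) t) + hLA

/-- If `θ` satisfies `∂θ/∂t = Hess_x θ(V₁,V₁)`, `X_s = V₁(X,t)`, and at `s = 0`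
the identity `⟨X_t, V₂⟩ = θ_s` holds for all `t`, then `⟨X_t, V₂⟩ = θ_s` holds
for all `(s,t)` (so the curves move by mean curvature). -/
theorem normal_speed_is_curvature (T ε : ℝ) (θ : ℝ × ℝ → ℝ → ℝ)
    (hθ : ContDiff ℝ 2 (fun q : (ℝ × ℝ) × ℝ => θ q.1 q.2))
    (X : ℝ → ℝ → ℝ × ℝ)
    (hX : ContDiff ℝ 2 (fun q : ℝ × ℝ => X q.1 q.2))
    (hXs : ∀ s t, deriv (fun σ => X σ t) s
      = (Real.cos (θ (X s t) t), Real.sin (θ (X s t) t)))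
    (hpde : ∀ (p : ℝ × ℝ), ∀ t ∈ Set.Ico (0 : ℝ) T,
      deriv (θ p) t
        = fderiv ℝ (fderiv ℝ (fun r => θ r t)) p (Real.cos (θ p t), Real.sin (θ p t))
            (Real.cos (θ p t), Real.sin (θ p t)))
    (h0 : ∀ t ∈ Set.Ico (0 : ℝ) T,
      (deriv (fun τ => X 0 τ) t).1 * (-Real.sin (θ (X 0 t) t))
        + (deriv (fun τ => X 0 τ) t).2 * Real.cos (θ (X 0 t) t)
        = deriv (fun σ => θ (X σ t) t) 0) :
    ∀ s ∈ Set.Ioo (-ε) ε, ∀ t ∈ Set.Ico (0 : ℝ) T,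
      (deriv (fun τ => X s τ) t).1 * (-Real.sin (θ (X s t) t))
        + (deriv (fun τ => X s τ) t).2 * Real.cos (θ (X s t) t)
        = deriv (fun σ => θ (X σ t) t) s := by
  intro s _ t ht
  have hu : ContDiff ℝ 2 (fun r => θ r t) := hθ.comp (contDiff_id.prodMk contDiff_const)
  have hXt : Continuous (fun σ => X σ t) :=
    hX.continuous.comp (continuous_id.prodMk continuous_const)
  have hφ : Continuous (fun σ => θ (X σ t) t) := hu.continuous.comp hXt
  have hc : Continuous fun σ => fderiv ℝ (fun r => θ r t) (X σ t)
      (-Real.sin (θ (X σ t) t), Real.cos (θ (X σ t) t)) :=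
    ((hu.continuous_fderiv two_ne_zero).comp hXt).clm_apply
      ((Real.continuous_sin.comp hφ).neg.prodMk (Real.continuous_cos.comp hφ))
  exact sub_eq_zero.1 <| eq_zero_of_hasDerivAt_mul_self hc
    (hasDerivAt_normalDefect hθ hX hXs (hpde · t ht)) (sub_eq_zero.2 (h0 t ht)) s
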